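/- arXiv:1504.01237 — 4 statements merged into one kernel-verified Lean document; each statement's English description precedes it below -/
import Mathlib

section
/- Entropy production identity for the Leslie stretch stress (Section 2.4): Let d, e, a ∈ ℝⁿ with |d| = 1 and ⟨e,d⟩ = 0, let M ∈ ℝⁿˣⁿ with symmetric part D = (M+Mᵀ)/2 and antisymmetric part V = (M−Mᵀ)/2, let γ, μ_V, μ_D ∈ ℝ with γ ≠ 0, and set n := μ_V Vd + μ_D P_d Dd − γ e and S := ((μ_D+μ_V)/(2γ)) n⊗d + ((μ_D−μ_V)/(2γ)) d⊗n. Then S:M + ⟨e,a⟩ = (1/γ)( |a|² + ⟨n+a, μ_V Vd + μ_D P_d Dd − a⟩ ). In particular, if n = −a, then S:M + ⟨e,a⟩ = |a|²/γ. -/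
open scoped BigOperators
open Matrix

/-- Euclidean inner product on `Fin n → ℝ`. -/
def dotv {n : ℕ} (a b : Fin n → ℝ) : ℝ := ∑ i, a i * b i

/-- Frobenius product `A : B = Σᵢⱼ Aᵢⱼ Bᵢⱼ` of two matrices. -/
def frob {n : ℕ} (A B : Matrix (Fin n) (Fin n) ℝ) : ℝ := ∑ i, ∑ j, A i j * B i j

/-!
Write `w = μ_V Vd + μ_D P_d Dd`. Since `Vd ⊥ d` (`V` is skew), `P_d Dd ⊥ d` and `e ⊥ d`, also
`n = w − γ e ⊥ d`; hence `P_d` can be dropped against `n`, and splitting `M = D + V` gives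
`S : M = ⟨n, w⟩ / γ`. Substituting `n = w − γ e` leaves a polynomial identity in inner products.
-/

section DotProduct

variable {ι K : Type*} [Fintype ι]

theorem dotProduct_transpose_mulVec_comm [CommSemiring K] (A : Matrix ι ι K) (u v : ι → K) :
    u ⬝ᵥ Aᵀ *ᵥ v = v ⬝ᵥ A *ᵥ u := by
  rw [mulVec_transpose, dotProduct_comm, dotProduct_mulVec]

theorem dotProduct_skewPart_mulVec_self [Field K] (A : Matrix ι ι K) (v : ι → K) :
    v ⬝ᵥ ((1 / 2 : K) • (A - Aᵀ)) *ᵥ v = 0 := by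
  rw [smul_mulVec, sub_mulVec, dotProduct_smul, dotProduct_sub,
    dotProduct_transpose_mulVec_comm, sub_self, smul_zero]

theorem dotProduct_sub_smul_of_dotProduct_eq_zero [CommRing K] {u d : ι → K}
    (hud : u ⬝ᵥ d = 0) (v : ι → K) : u ⬝ᵥ (v - (d ⬝ᵥ v) • d) = u ⬝ᵥ v := by
  rw [dotProduct_sub, dotProduct_smul, hud, smul_zero, sub_zero]

theorem dotProduct_sub_smul_self [CommRing K] {d : ι → K} (hd : d ⬝ᵥ d = 1) (v : ι → K) :
    d ⬝ᵥ (v - (d ⬝ᵥ v) • d) = 0 := by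
  rw [dotProduct_sub, dotProduct_smul, hd, smul_eq_mul, mul_one, sub_self]

theorem dotProduct_entropy_balance [Field K] (w e a : ι → K) {γ : K} (hγ : γ ≠ 0) :
    (w - γ • e) ⬝ᵥ w / γ + e ⬝ᵥ a = 1 / γ * (a ⬝ᵥ a + (w - γ • e + a) ⬝ᵥ (w - a)) := by
  simp only [add_dotProduct, sub_dotProduct, dotProduct_sub, smul_dotProduct, smul_eq_mul,
    dotProduct_comm a w]
  field_simp
  ring

end DotProduct

section Frobenius

variable {n : ℕ}

theorem dotv_eq_dotProduct (a b : Fin n → ℝ) : dotv a b = a ⬝ᵥ b := rfl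

theorem frob_vecMulVec (u v : Fin n → ℝ) (M : Matrix (Fin n) (Fin n) ℝ) :
    frob (vecMulVec u v) M = u ⬝ᵥ M *ᵥ v := by
  simp only [frob, dotProduct, mulVec, vecMulVec_apply, Finset.mul_sum]
  exact Finset.sum_congr rfl fun i _ => Finset.sum_congr rfl fun j _ => by ring

theorem frob_add_left (A B M : Matrix (Fin n) (Fin n) ℝ) :
    frob (A + B) M = frob A M + frob B M := by
  simp only [frob, Matrix.add_apply, add_mul, Finset.sum_add_distrib]

theorem frob_smul_left (r : ℝ) (A M : Matrix (Fin n) (Fin n) ℝ) :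
    frob (r • A) M = r * frob A M := by
  simp only [frob, Matrix.smul_apply, smul_eq_mul, Finset.mul_sum, mul_assoc]

theorem frob_smul_vecMulVec_add_smul_vecMulVec (α β : ℝ) (u v : Fin n → ℝ)
    (M : Matrix (Fin n) (Fin n) ℝ) :
    frob (α • vecMulVec u v + β • vecMulVec v u) M
      = α * u ⬝ᵥ M *ᵥ v + β * u ⬝ᵥ Mᵀ *ᵥ v := by
  rw [frob_add_left, frob_smul_left, frob_smul_left, frob_vecMulVec, frob_vecMulVec,
    dotProduct_transpose_mulVec_comm]

theorem frob_stretch_eq_dotProduct_div {d u : Fin n → ℝ} (hud : u ⬝ᵥ d = 0)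
    (M : Matrix (Fin n) (Fin n) ℝ) (γ μV μD : ℝ) :
    frob (((μD + μV) / (2 * γ)) • vecMulVec u d + ((μD - μV) / (2 * γ)) • vecMulVec d u) M
      = u ⬝ᵥ (μV • ((1 / 2 : ℝ) • (M - Mᵀ)) *ᵥ d
          + μD • (((1 / 2 : ℝ) • (M + Mᵀ)) *ᵥ d - (d ⬝ᵥ ((1 / 2 : ℝ) • (M + Mᵀ)) *ᵥ d) • d))
        / γ := by
  rw [frob_smul_vecMulVec_add_smul_vecMulVec, dotProduct_add, dotProduct_smul, dotProduct_smul,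
    dotProduct_sub_smul_of_dotProduct_eq_zero hud]
  simp only [smul_mulVec, add_mulVec, sub_mulVec, dotProduct_smul, dotProduct_add,
    dotProduct_sub, smul_eq_mul]
  ring

end Frobenius

/-- Entropy production identity for the Leslie stretch stress: with
`n = μ_V Vd + μ_D P_d Dd − γe` and
`S = ((μ_D+μ_V)/2γ) n⊗d + ((μ_D−μ_V)/2γ) d⊗n`, one has
`S:M + ⟨e,a⟩ = (1/γ)(|a|² + ⟨n+a, μ_V Vd + μ_D P_d Dd − a⟩)`;
in particular `S:M + ⟨e,a⟩ = |a|²/γ` when `n = −a`. -/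
theorem stretch_entropy_identity {n : ℕ}
    (d e a : Fin n → ℝ) (hd : dotv d d = 1) (hed : dotv e d = 0)
    (M D V : Matrix (Fin n) (Fin n) ℝ)
    (hD : D = ((1:ℝ)/2) • (M + Mᵀ)) (hV : V = ((1:ℝ)/2) • (M - Mᵀ))
    (γ μV μD : ℝ) (hγ : γ ≠ 0)
    (Pd : (Fin n → ℝ) → (Fin n → ℝ)) (hPd : Pd = fun v => v - (dotv d v) • d)
    (nv : Fin n → ℝ)
    (hnv : nv = μV • V.mulVec d + μD • Pd (D.mulVec d) - γ • e)
    (S : Matrix (Fin n) (Fin n) ℝ)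
    (hS : S = ((μD + μV)/(2*γ)) • Matrix.vecMulVec nv d
            + ((μD - μV)/(2*γ)) • Matrix.vecMulVec d nv) :
    frob S M + dotv e a
      = (1/γ) * (dotv a a + dotv (nv + a) (μV • V.mulVec d + μD • Pd (D.mulVec d) - a))
    ∧ (nv = -a → frob S M + dotv e a = dotv a a / γ) := by
  subst hD hV hPd
  simp only [dotv_eq_dotProduct] at hd hed hnv ⊢
  set w := μV • ((1 / 2 : ℝ) • (M - Mᵀ)) *ᵥ d
    + μD • (((1 / 2 : ℝ) • (M + Mᵀ)) *ᵥ d - (d ⬝ᵥ ((1 / 2 : ℝ) • (M + Mᵀ)) *ᵥ d) • d)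
  have hdw : d ⬝ᵥ w = 0 := by
    rw [dotProduct_add, dotProduct_smul, dotProduct_smul, dotProduct_skewPart_mulVec_self,
      dotProduct_sub_smul_self hd, smul_zero, smul_zero, add_zero]
  have hnd : nv ⬝ᵥ d = 0 := by
    rw [hnv, sub_dotProduct, dotProduct_comm, hdw, smul_dotProduct, hed, smul_zero, sub_zero]
  have hbalance : frob S M + e ⬝ᵥ a = 1 / γ * (a ⬝ᵥ a + (nv + a) ⬝ᵥ (w - a)) := by
    rw [hS, frob_stretch_eq_dotProduct_div hnd, hnv]
    exact dotProduct_entropy_balance w e a hγ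
  refine ⟨hbalance, fun hna => ?_⟩
  rw [hbalance, hna, neg_add_cancel, zero_dotProduct, add_zero, one_div_mul_eq_div]
end

section
/- Reduced angular equation in the proof of Lemma 1: Let U ⊆ ℝⁿ be open, let a : U → ℝ be continuously differentiable, let c₁, φ : U → ℝ be twice continuously differentiable, let w : U → ℝ be any function, and define d₁ := c₁ cos φ and d₂ := c₁ sin φ. If div(a∇d₁) + w d₁ = 0 and div(a∇d₂) + w d₂ = 0 on U, then c₁ div(a∇φ) + 2a ∇c₁·∇φ = 0 on U. -/
open scoped BigOperators

/-- Partial derivative in the `i`-th coordinate direction of a scalar field on `ℝⁿ`. -/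
noncomputable def pxs {n : ℕ} (i : Fin n) (f : (Fin n → ℝ) → ℝ) (x : Fin n → ℝ) : ℝ :=
  fderiv ℝ f x (Pi.single i 1)

/-- Divergence form operator `div(a∇f) = Σᵢ ∂ᵢ(a ∂ᵢ f)` acting on scalar fields. -/
noncomputable def divA {n : ℕ} (a f : (Fin n → ℝ) → ℝ) (x : Fin n → ℝ) : ℝ :=
  ∑ i, pxs i (fun y => a y * pxs i f y) x

/-!
With `d₁ = c₁ cos φ` and `d₂ = c₁ sin φ`, the combination `cos φ · div(a∇d₂) - sin φ · div(a∇d₁)`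
equals `c₁ div(a∇φ) + 2a ∇c₁·∇φ` by the product and chain rules and `sin² + cos² = 1`,
while the zeroth-order terms cancel: `cos φ · w d₂ - sin φ · w d₁ = 0`.
-/

open Filter Topology Real

section Calculus

variable {n : ℕ} {i : Fin n} {f g φ : (Fin n → ℝ) → ℝ} {x : Fin n → ℝ}

lemma pxs_congr (h : f =ᶠ[𝓝 x] g) : pxs i f x = pxs i g x := by
  rw [pxs, pxs, h.fderiv_eq]

lemma pxs_add (hf : DifferentiableAt ℝ f x) (hg : DifferentiableAt ℝ g x) :
    pxs i (fun y => f y + g y) x = pxs i f x + pxs i g x := by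
  simp [pxs, fderiv_fun_add hf hg]

lemma pxs_sub (hf : DifferentiableAt ℝ f x) (hg : DifferentiableAt ℝ g x) :
    pxs i (fun y => f y - g y) x = pxs i f x - pxs i g x := by
  simp [pxs, fderiv_fun_sub hf hg]

lemma pxs_mul (hf : DifferentiableAt ℝ f x) (hg : DifferentiableAt ℝ g x) :
    pxs i (fun y => f y * g y) x = f x * pxs i g x + g x * pxs i f x := by
  simp [pxs, fderiv_fun_mul hf hg]

lemma pxs_comp {h : ℝ → ℝ} {h' : ℝ} (hh : HasDerivAt h h' (φ x))
    (hφ : DifferentiableAt ℝ φ x) : pxs i (fun y => h (φ y)) x = h' * pxs i φ x := by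
  have hd : HasFDerivAt (fun y => h (φ y)) (h' • fderiv ℝ φ x) x :=
    hh.comp_hasFDerivAt x hφ.hasFDerivAt
  simp [pxs, hd.fderiv]

lemma pxs_sin (hφ : DifferentiableAt ℝ φ x) :
    pxs i (fun y => sin (φ y)) x = cos (φ x) * pxs i φ x :=
  pxs_comp (hasDerivAt_sin _) hφ

lemma pxs_cos (hφ : DifferentiableAt ℝ φ x) :
    pxs i (fun y => cos (φ y)) x = -sin (φ x) * pxs i φ x :=
  pxs_comp (hasDerivAt_cos _) hφ

lemma ContDiffOn.pxs {U : Set (Fin n → ℝ)} {m : WithTop ℕ∞} (hU : IsOpen U)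
    (hf : ContDiffOn ℝ (m + 1) f U) : ContDiffOn ℝ m (pxs i f) U :=
  (hf.fderiv_of_isOpen hU le_rfl).clm_apply contDiffOn_const

end Calculus

section AngularIdentity

variable {n : ℕ} {i : Fin n} {x : Fin n → ℝ}

lemma cos_mul_pxs_sub_sin_mul_pxs {φ P Q : (Fin n → ℝ) → ℝ} (hφ : DifferentiableAt ℝ φ x)
    (hP : DifferentiableAt ℝ P x) (hQ : DifferentiableAt ℝ Q x) :
    cos (φ x) * pxs i (fun y => sin (φ y) * P y + cos (φ y) * Q y) x
      - sin (φ x) * pxs i (fun y => cos (φ y) * P y - sin (φ y) * Q y) x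
      = pxs i φ x * P x + pxs i Q x := by
  have hsin := hφ.sin
  have hcos := hφ.cos
  rw [pxs_add (hsin.fun_mul hP) (hcos.fun_mul hQ), pxs_sub (hcos.fun_mul hP) (hsin.fun_mul hQ),
    pxs_mul hsin hP, pxs_mul hcos hQ, pxs_mul hcos hP, pxs_mul hsin hQ,
    pxs_sin hφ, pxs_cos hφ]
  linear_combination (pxs i φ x * P x + pxs i Q x) * sin_sq_add_cos_sq (φ x)

lemma cos_mul_pxs_sub_sin_mul_pxs_polar {a c φ : (Fin n → ℝ) → ℝ}
    (hc : ∀ᶠ y in 𝓝 x, DifferentiableAt ℝ c y) (hφ : ∀ᶠ y in 𝓝 x, DifferentiableAt ℝ φ y)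
    (ha : DifferentiableAt ℝ a x) (hc' : DifferentiableAt ℝ (pxs i c) x)
    (hφ' : DifferentiableAt ℝ (pxs i φ) x) :
    cos (φ x) * pxs i (fun y => a y * pxs i (fun z => c z * sin (φ z)) y) x
      - sin (φ x) * pxs i (fun y => a y * pxs i (fun z => c z * cos (φ z)) y) x
      = c x * pxs i (fun y => a y * pxs i φ y) x + 2 * a x * (pxs i c x * pxs i φ x) := by
  set P := fun y => a y * pxs i c y
  set R := fun y => a y * pxs i φ y
  have hR : DifferentiableAt ℝ R x := ha.fun_mul hφ'
  have expand_sin : (fun y => a y * pxs i (fun z => c z * sin (φ z)) y) =ᶠ[𝓝 x]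
      fun y => sin (φ y) * P y + cos (φ y) * (c y * R y) := by
    filter_upwards [hc, hφ] with y hcy hφy
    rw [pxs_mul hcy hφy.sin, pxs_sin hφy]
    ring
  have expand_cos : (fun y => a y * pxs i (fun z => c z * cos (φ z)) y) =ᶠ[𝓝 x]
      fun y => cos (φ y) * P y - sin (φ y) * (c y * R y) := by
    filter_upwards [hc, hφ] with y hcy hφy
    rw [pxs_mul hcy hφy.cos, pxs_cos hφy]
    ring
  rw [pxs_congr expand_sin, pxs_congr expand_cos,
    cos_mul_pxs_sub_sin_mul_pxs hφ.self_of_nhds (ha.fun_mul hc') (hc.self_of_nhds.fun_mul hR),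
    pxs_mul hc.self_of_nhds hR]
  ring

lemma cos_mul_divA_sub_sin_mul_divA_polar {a c φ : (Fin n → ℝ) → ℝ}
    (hc : ∀ᶠ y in 𝓝 x, DifferentiableAt ℝ c y) (hφ : ∀ᶠ y in 𝓝 x, DifferentiableAt ℝ φ y)
    (ha : DifferentiableAt ℝ a x) (hc' : ∀ i, DifferentiableAt ℝ (pxs i c) x)
    (hφ' : ∀ i, DifferentiableAt ℝ (pxs i φ) x) :
    cos (φ x) * divA a (fun z => c z * sin (φ z)) x
      - sin (φ x) * divA a (fun z => c z * cos (φ z)) x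
      = c x * divA a φ x + 2 * a x * ∑ i, pxs i c x * pxs i φ x := by
  simp only [divA, Finset.mul_sum, ← Finset.sum_sub_distrib, ← Finset.sum_add_distrib]
  exact Finset.sum_congr rfl fun i _ =>
    cos_mul_pxs_sub_sin_mul_pxs_polar hc hφ ha (hc' i) (hφ' i)

end AngularIdentity

/-- Reduced angular equation in the proof of Lemma 1: if `d₁ = c₁ cos φ` and
`d₂ = c₁ sin φ` both satisfy `div(a∇dᵢ) + w dᵢ = 0` on the open set `U`, then
`c₁ div(a∇φ) + 2a ∇c₁·∇φ = 0` on `U`. -/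
theorem reduced_angular_equation {n : ℕ}
    (U : Set (Fin n → ℝ)) (hU : IsOpen U)
    (a : (Fin n → ℝ) → ℝ) (ha : ContDiffOn ℝ 1 a U)
    (c₁ φ : (Fin n → ℝ) → ℝ)
    (hc₁ : ContDiffOn ℝ 2 c₁ U) (hφ : ContDiffOn ℝ 2 φ U)
    (w : (Fin n → ℝ) → ℝ)
    (h1 : ∀ x ∈ U, divA a (fun y => c₁ y * Real.cos (φ y)) x
            + w x * (c₁ x * Real.cos (φ x)) = 0)
    (h2 : ∀ x ∈ U, divA a (fun y => c₁ y * Real.sin (φ y)) x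
            + w x * (c₁ x * Real.sin (φ x)) = 0) :
    ∀ x ∈ U, c₁ x * divA a φ x + 2 * a x * ∑ i, pxs i c₁ x * pxs i φ x = 0 := by
  intro x hx
  have differentiableAt {f : (Fin n → ℝ) → ℝ} (hf : ContDiffOn ℝ 1 f U) {y : Fin n → ℝ}
      (hy : y ∈ U) : DifferentiableAt ℝ f y :=
    (hf.differentiableOn one_ne_zero y hy).differentiableAt (hU.mem_nhds hy)
  have near {f : (Fin n → ℝ) → ℝ} (hf : ContDiffOn ℝ 1 f U) :
      ∀ᶠ y in 𝓝 x, DifferentiableAt ℝ f y :=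
    eventually_of_mem (hU.mem_nhds hx) fun y hy => differentiableAt hf hy
  have identity := cos_mul_divA_sub_sin_mul_divA_polar (near (hc₁.of_le one_le_two))
    (near (hφ.of_le one_le_two)) (differentiableAt ha hx)
    (fun i => differentiableAt (hc₁.pxs hU) hx) (fun i => differentiableAt (hφ.pxs hU) hx)
  linear_combination cos (φ x) * h2 x hx - sin (φ x) * h1 x hx - identity
end

section
/- Reduced radial equation in the proof of Lemma 1: Let U ⊆ ℝⁿ be open, let a : U → ℝ be continuously differentiable, let c₁, φ : U → ℝ be twice continuously differentiable, let w : U → ℝ be any function, and define d₁ := c₁ cos φ and d₂ := c₁ sin φ. If div(a∇d₁) + w d₁ = 0 and div(a∇d₂) + w d₂ = 0 on U, then div(a∇c₁) − a c₁|∇φ|² + w c₁ = 0 on U; equivalently, −div(a∇c₁) + a c₁|∇φ|² = w c₁. -/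
open scoped BigOperators

section Directional

variable {E : Type*} [NormedAddCommGroup E] [NormedSpace ℝ E]

theorem fderiv_mul_cos_apply {c φ : E → ℝ} {y : E} (hc : DifferentiableAt ℝ c y)
    (hφ : DifferentiableAt ℝ φ y) (v : E) :
    fderiv ℝ (fun z => c z * Real.cos (φ z)) y v
      = Real.cos (φ y) * fderiv ℝ c y v - Real.sin (φ y) * (c y * fderiv ℝ φ y v) := by
  rw [fderiv_fun_mul hc hφ.cos, fderiv_cos hφ]
  simp only [add_apply, smul_apply, smul_eq_mul]
  ring

theorem fderiv_mul_sin_apply {c φ : E → ℝ} {y : E} (hc : DifferentiableAt ℝ c y)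
    (hφ : DifferentiableAt ℝ φ y) (v : E) :
    fderiv ℝ (fun z => c z * Real.sin (φ z)) y v
      = Real.sin (φ y) * fderiv ℝ c y v + Real.cos (φ y) * (c y * fderiv ℝ φ y v) := by
  rw [fderiv_fun_mul hc hφ.sin, fderiv_sin hφ]
  simp only [add_apply, smul_apply, smul_eq_mul]
  ring

theorem cos_mul_fderiv_rotate_add_sin_mul_fderiv_rotate {p q φ : E → ℝ} {x : E}
    (hp : DifferentiableAt ℝ p x) (hq : DifferentiableAt ℝ q x) (hφ : DifferentiableAt ℝ φ x)
    (v : E) :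
    Real.cos (φ x) * fderiv ℝ (fun y => Real.cos (φ y) * p y - Real.sin (φ y) * q y) x v
      + Real.sin (φ x) * fderiv ℝ (fun y => Real.sin (φ y) * p y + Real.cos (φ y) * q y) x v
      = fderiv ℝ p x v - q x * fderiv ℝ φ x v := by
  rw [fderiv_fun_sub (hφ.cos.fun_mul hp) (hφ.sin.fun_mul hq),
    fderiv_fun_add (hφ.sin.fun_mul hp) (hφ.cos.fun_mul hq),
    fderiv_fun_mul hφ.cos hp, fderiv_fun_mul hφ.sin hq, fderiv_fun_mul hφ.sin hp,
    fderiv_fun_mul hφ.cos hq, fderiv_cos hφ, fderiv_sin hφ]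
  simp only [add_apply, sub_apply,
    smul_apply, smul_eq_mul]
  linear_combination (fderiv ℝ p x v - q x * fderiv ℝ φ x v) * Real.sin_sq_add_cos_sq (φ x)

theorem ContDiffAt.differentiableAt_fderiv_apply {f : E → ℝ} {x : E} (hf : ContDiffAt ℝ 2 f x)
    (v : E) : DifferentiableAt ℝ (fun y => fderiv ℝ f y v) x :=
  ((hf.fderiv_right (m := 1) (by norm_num)).clm_apply contDiffAt_const).differentiableAt
    one_ne_zero

theorem ContDiffAt.eventually_differentiableAt {f : E → ℝ} {x : E} (hf : ContDiffAt ℝ 2 f x) :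
    ∀ᶠ y in nhds x, DifferentiableAt ℝ f y :=
  (hf.eventually (by simp)).mono fun _ hy => hy.differentiableAt two_ne_zero

theorem cos_mul_fderiv_flux_mul_cos_add_sin_mul_fderiv_flux_mul_sin {a c φ : E → ℝ} {x : E}
    (ha : DifferentiableAt ℝ a x) (hc : ContDiffAt ℝ 2 c x) (hφ : ContDiffAt ℝ 2 φ x) (v : E) :
    Real.cos (φ x) * fderiv ℝ (fun y => a y * fderiv ℝ (fun z => c z * Real.cos (φ z)) y v) x v
      + Real.sin (φ x) * fderiv ℝ (fun y => a y * fderiv ℝ (fun z => c z * Real.sin (φ z)) y v) x v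
      = fderiv ℝ (fun y => a y * fderiv ℝ c y v) x v - a x * c x * fderiv ℝ φ x v ^ 2 := by
  set p : E → ℝ := fun y => a y * fderiv ℝ c y v
  set q : E → ℝ := fun y => a y * (c y * fderiv ℝ φ y v)
  have hp : DifferentiableAt ℝ p x := ha.mul (hc.differentiableAt_fderiv_apply v)
  have hq : DifferentiableAt ℝ q x :=
    ha.mul ((hc.differentiableAt two_ne_zero).mul (hφ.differentiableAt_fderiv_apply v))
  have hdiff := hc.eventually_differentiableAt.and hφ.eventually_differentiableAt
  have hflux₁ : (fun y => a y * fderiv ℝ (fun z => c z * Real.cos (φ z)) y v)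
      =ᶠ[nhds x] fun y => Real.cos (φ y) * p y - Real.sin (φ y) * q y :=
    hdiff.mono fun y ⟨hcy, hφy⟩ => by
      simp only [p, q, fderiv_mul_cos_apply hcy hφy]
      ring
  have hflux₂ : (fun y => a y * fderiv ℝ (fun z => c z * Real.sin (φ z)) y v)
      =ᶠ[nhds x] fun y => Real.sin (φ y) * p y + Real.cos (φ y) * q y :=
    hdiff.mono fun y ⟨hcy, hφy⟩ => by
      simp only [p, q, fderiv_mul_sin_apply hcy hφy]
      ring
  rw [hflux₁.fderiv_eq, hflux₂.fderiv_eq,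
    cos_mul_fderiv_rotate_add_sin_mul_fderiv_rotate hp hq (hφ.differentiableAt two_ne_zero)]
  ring

end Directional

theorem cos_mul_divA_add_sin_mul_divA {n : ℕ} {a c φ : (Fin n → ℝ) → ℝ} {x : Fin n → ℝ}
    (ha : DifferentiableAt ℝ a x) (hc : ContDiffAt ℝ 2 c x) (hφ : ContDiffAt ℝ 2 φ x) :
    Real.cos (φ x) * divA a (fun y => c y * Real.cos (φ y)) x
      + Real.sin (φ x) * divA a (fun y => c y * Real.sin (φ y)) x
      = divA a c x - a x * c x * ∑ i, (pxs i φ x) ^ 2 := by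
  simp only [divA, Finset.mul_sum, ← Finset.sum_add_distrib, ← Finset.sum_sub_distrib]
  exact Finset.sum_congr rfl fun i _ =>
    cos_mul_fderiv_flux_mul_cos_add_sin_mul_fderiv_flux_mul_sin ha hc hφ (Pi.single i 1)

/-- Reduced radial equation in the proof of Lemma 1: if `d₁ = c₁ cos φ` and
`d₂ = c₁ sin φ` both satisfy `div(a∇dᵢ) + w dᵢ = 0` on the open set `U`, then
`div(a∇c₁) − a c₁|∇φ|² + w c₁ = 0` on `U`, equivalently
`−div(a∇c₁) + a c₁|∇φ|² = w c₁`. -/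
theorem reduced_radial_equation {n : ℕ}
    (U : Set (Fin n → ℝ)) (hU : IsOpen U)
    (a : (Fin n → ℝ) → ℝ) (ha : ContDiffOn ℝ 1 a U)
    (c₁ φ : (Fin n → ℝ) → ℝ)
    (hc₁ : ContDiffOn ℝ 2 c₁ U) (hφ : ContDiffOn ℝ 2 φ U)
    (w : (Fin n → ℝ) → ℝ)
    (h1 : ∀ x ∈ U, divA a (fun y => c₁ y * Real.cos (φ y)) x
            + w x * (c₁ x * Real.cos (φ x)) = 0)
    (h2 : ∀ x ∈ U, divA a (fun y => c₁ y * Real.sin (φ y)) x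
            + w x * (c₁ x * Real.sin (φ x)) = 0) :
    ∀ x ∈ U,
      divA a c₁ x - a x * c₁ x * ∑ i, (pxs i φ x)^2 + w x * c₁ x = 0
      ∧ -divA a c₁ x + a x * c₁ x * ∑ i, (pxs i φ x)^2 = w x * c₁ x := by
  intro x hx
  have hUx := hU.mem_nhds hx
  have hrot := cos_mul_divA_add_sin_mul_divA ((ha.contDiffAt hUx).differentiableAt one_ne_zero)
    (hc₁.contDiffAt hUx) (hφ.contDiffAt hUx)
  have hc₁_eq : divA a c₁ x - a x * c₁ x * ∑ i, (pxs i φ x)^2 + w x * c₁ x = 0 := by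
    linear_combination Real.cos (φ x) * h1 x hx + Real.sin (φ x) * h2 x hx - hrot
      - w x * c₁ x * Real.sin_sq_add_cos_sq (φ x)
  exact ⟨hc₁_eq, by linarith⟩
end

section
/- Normal ellipticity of the reduced principal symbol (proof of Theorem 2, step a): Let p, q, m, γ, b₀, b₁ ∈ ℝ with γ > 0, q > 0, m ≥ 0, b₀b₁ ≥ 0 and p > γ b₀ b₁ m. Then every complex root z of the characteristic polynomial det(z I − A) of the matrix A := [[p, −i b₀ q], [i b₁ m, q/γ]] ∈ ℂ^{2×2} is real and strictly positive; equivalently, the two zeros of z ↦ det(z + A) are real and negative. -/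
open Matrix Complex

/-!
Since `(-i b₀ q)(i b₁ m) = b₀ b₁ q m`, a root `z` of the characteristic polynomial satisfies
`(z - p)(z - q/γ) = b₀ b₁ q m`, a real quadratic with nonnegative right-hand side, hence with
real roots. The hypothesis `p > γ b₀ b₁ m` says the right-hand side is below `p · q/γ`, the value
of the left-hand side at `z = 0`, which rules out roots `z ≤ 0`.
-/

theorem Matrix.eval_charpoly_fin_two {R : Type*} [CommRing R] [Nontrivial R]
    (A : Matrix (Fin 2) (Fin 2) R) (z : R) :
    A.charpoly.eval z = (z - A 0 0) * (z - A 1 1) - A 0 1 * A 1 0 := by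
  simp only [charpoly_fin_two, trace_fin_two, det_fin_two, Polynomial.eval_add,
    Polynomial.eval_sub, Polynomial.eval_mul, Polynomial.eval_pow, Polynomial.eval_X,
    Polynomial.eval_C]
  ring

/-- For `z = x + iy` the imaginary part gives `y (2x - a - b) = 0`; were `y ≠ 0`, the real part would read
`c = -((a - b) / 2)² - y² < 0`. -/
theorem Complex.im_eq_zero_of_sub_mul_sub_eq_ofReal {z : ℂ} {a b c : ℝ} (hc : 0 ≤ c)
    (h : (z - a) * (z - b) = c) : z.im = 0 := by
  have hre := congrArg re h
  have him := congrArg im h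
  simp only [mul_re, mul_im, sub_re, sub_im, ofReal_re, ofReal_im, sub_zero] at hre him
  by_contra hy
  have hx : 2 * z.re = a + b := by
    apply mul_left_cancel₀ hy
    linarith
  nlinarith [sq_nonneg (a - b), sq_pos_of_ne_zero hy]

theorem pos_of_sub_mul_sub_eq {x a b c : ℝ} (ha : 0 ≤ a) (hb : 0 ≤ b) (hc : c < a * b)
    (h : (x - a) * (x - b) = c) : 0 < x := by
  by_contra! hx
  nlinarith [mul_le_mul (by linarith : a ≤ a - x) (by linarith : b ≤ b - x) hb (by linarith)]

theorem Matrix.im_eq_zero_and_re_pos_of_isRoot_charpoly_fin_two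
    {A : Matrix (Fin 2) (Fin 2) ℂ} {a b c : ℝ} (ha : A 0 0 = a) (hb : A 1 1 = b)
    (hc : A 0 1 * A 1 0 = c) (ha₀ : 0 ≤ a) (hb₀ : 0 ≤ b) (hc₀ : 0 ≤ c) (hcab : c < a * b)
    {z : ℂ} (hz : A.charpoly.IsRoot z) : z.im = 0 ∧ 0 < z.re := by
  have hroot : (z - a) * (z - b) = c := by
    rw [← ha, ← hb, ← hc, ← sub_eq_zero, ← eval_charpoly_fin_two]
    exact hz
  have him : z.im = 0 := im_eq_zero_of_sub_mul_sub_eq_ofReal hc₀ hroot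
  refine ⟨him, pos_of_sub_mul_sub_eq ha₀ hb₀ hcab ?_⟩
  rw [← re_add_im z, him, ofReal_zero, zero_mul, add_zero] at hroot
  exact_mod_cast hroot

/-- Normal ellipticity of the reduced principal symbol: for real `p, q, m, γ, b₀, b₁` with
`γ > 0`, `q > 0`, `m ≥ 0`, `b₀b₁ ≥ 0` and `p > γb₀b₁m`, every complex root `z` of the
characteristic polynomial `det(zI − A)` of
`A = [[p, −i b₀ q], [i b₁ m, q/γ]]` is real and strictly positive. -/
theorem reduced_symbol_normally_elliptic
    (p q m γ b₀ b₁ : ℝ)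
    (hγ : 0 < γ) (hq : 0 < q) (hm : 0 ≤ m) (hb : 0 ≤ b₀ * b₁)
    (hp : γ * b₀ * b₁ * m < p) :
    ∀ z : ℂ,
      (Matrix.charpoly
        (!![(p : ℂ), -Complex.I * (b₀ : ℂ) * (q : ℂ);
            Complex.I * (b₁ : ℂ) * (m : ℂ), (q : ℂ) / (γ : ℂ)])).IsRoot z →
      z.im = 0 ∧ 0 < z.re := by
  intro z hz
  have hc₀ : 0 ≤ b₀ * b₁ * q * m := by positivity
  have hp₀ : 0 ≤ p := by linarith [mul_nonneg (mul_nonneg hγ.le hb) hm]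
  have hcab : b₀ * b₁ * q * m < p * (q / γ) := by
    rw [mul_div_assoc', lt_div_iff₀ hγ]
    nlinarith [mul_lt_mul_of_pos_right hp hq]
  refine im_eq_zero_and_re_pos_of_isRoot_charpoly_fin_two (a := p) (b := q / γ)
    rfl (by push_cast; rfl) ?_ hp₀ (by positivity) hc₀ hcab hz
  simp only [cons_val', cons_val_zero, cons_val_one, empty_val', cons_val_fin_one, of_apply]
  push_cast
  linear_combination (-(b₀ : ℂ) * b₁ * q * m) * I_sq
end
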